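/- arXiv:2312.13584 — 2 statements merged into one kernel-verified Lean document; each statement's English description precedes it below -/
import Mathlib

section
/- Let λ₁, …, λ_n be real constants with μ_λ ≤ λ_i ≤ 0 for all i, where μ_λ ≤ 0, let γ > 0, and let μ_x ≥ 0 with max{μ_λ², μ_x²} > 0. Define f(x) = max_{1 ≤ i ≤ n} (1 + γ(x + λ_i)²)^{-1/2}. Then f is Lipschitz continuous on [0, μ_x] with Lipschitz constant L_f satisfying: L_f ≤ (2/(3√3))·√γ when γ ≥ 1/(2·max{μ_λ², μ_x²}), and L_f ≤ γ·max{−μ_λ, μ_x}·(1 + γ·max{μ_λ², μ_x²})^{-3/2} otherwise; and in all cases L_f ≤ (2/(3√3))·√γ. -/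
private lemma le_of_sq_le_sq' {a b : ℝ} (ha : 0 ≤ a) (hb : 0 ≤ b) (h : a ^ 2 ≤ b ^ 2) :
    a ≤ b := by nlinarith

private lemma sup_abs_sub_le {n : ℕ} (F G : Fin (n + 1) → ℝ) (L : ℝ)
    (h : ∀ i, |F i - G i| ≤ L) : |(⨆ i, F i) - (⨆ i, G i)| ≤ L := by
  have hF : BddAbove (Set.range F) := (Set.finite_range F).bddAbove
  have hG : BddAbove (Set.range G) := (Set.finite_range G).bddAbove
  rw [abs_sub_le_iff]
  constructor
  · rw [sub_le_iff_le_add]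
    refine ciSup_le fun i => ?_
    have h1 := (abs_sub_le_iff.1 (h i)).1
    have h2 : G i ≤ ⨆ i, G i := le_ciSup hG i
    linarith
  · rw [sub_le_iff_le_add]
    refine ciSup_le fun i => ?_
    have h1 := (abs_sub_le_iff.1 (h i)).2
    have h2 : F i ≤ ⨆ i, F i := le_ciSup hF i
    linarith

private lemma hderiv_sqrtinv (γ : ℝ) (hγ : 0 < γ) (t : ℝ) :
    HasDerivAt (fun t => (Real.sqrt (1 + γ * t ^ 2))⁻¹)
      (-(γ * t) / ((1 + γ * t ^ 2) * Real.sqrt (1 + γ * t ^ 2))) t := by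
  have hu : (0:ℝ) < 1 + γ * t ^ 2 := by positivity
  have hsu : (0:ℝ) < Real.sqrt (1 + γ * t ^ 2) := Real.sqrt_pos.2 hu
  have h1 : HasDerivAt (fun t : ℝ => 1 + γ * t ^ 2) (γ * (2 * t)) t := by
    simpa using ((hasDerivAt_pow 2 t).const_mul γ).const_add 1
  have h2 := (Real.hasDerivAt_sqrt hu.ne').comp t h1
  have h3 := h2.inv hsu.ne'
  refine h3.congr_deriv ?_
  simp only [Function.comp]
  have hsq : Real.sqrt (1 + γ * t ^ 2) ^ 2 = 1 + γ * t ^ 2 := Real.sq_sqrt hu.le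
  field_simp
  rw [hsq]

private lemma comp_lip (γ C lo hi : ℝ) (hγ : 0 < γ)
    (hC : ∀ t, lo ≤ t → t ≤ hi →
      γ * |t| ≤ C * ((1 + γ * t ^ 2) * Real.sqrt (1 + γ * t ^ 2)))
    {a b : ℝ} (ha : a ∈ Set.Icc lo hi) (hb : b ∈ Set.Icc lo hi) :
    |1 / Real.sqrt (1 + γ * a ^ 2) - 1 / Real.sqrt (1 + γ * b ^ 2)| ≤ C * |a - b| := by
  have key := Convex.norm_image_sub_le_of_norm_deriv_le
    (f := fun t : ℝ => (Real.sqrt (1 + γ * t ^ 2))⁻¹) (s := Set.Icc lo hi) (C := C)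
    (fun x _ => (hderiv_sqrtinv γ hγ x).differentiableAt)
    (fun x hx => ?_) (convex_Icc lo hi) hb ha
  · simpa [one_div, abs_sub_comm, Real.norm_eq_abs] using key
  · have hu : (0:ℝ) < 1 + γ * x ^ 2 := by positivity
    have hsu : (0:ℝ) < Real.sqrt (1 + γ * x ^ 2) := Real.sqrt_pos.2 hu
    rw [(hderiv_sqrtinv γ hγ x).deriv]
    rw [Real.norm_eq_abs, abs_div, abs_neg, abs_mul, abs_of_pos hγ,
      abs_of_pos (by positivity : (0:ℝ) < (1 + γ * x ^ 2) * Real.sqrt (1 + γ * x ^ 2))]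
    rw [div_le_iff₀ (by positivity)]
    exact hC x hx.1 hx.2

private lemma global_bound (γ t : ℝ) (hγ : 0 < γ) :
    γ * |t| ≤ 2 / (3 * Real.sqrt 3) * Real.sqrt γ *
      ((1 + γ * t ^ 2) * Real.sqrt (1 + γ * t ^ 2)) := by
  have hu : (0:ℝ) < 1 + γ * t ^ 2 := by positivity
  have h3 : (Real.sqrt 3) ^ 2 = 3 := Real.sq_sqrt (by norm_num)
  have hγ2 : (Real.sqrt γ) ^ 2 = γ := Real.sq_sqrt hγ.le
  have hsu2 : (Real.sqrt (1 + γ * t ^ 2)) ^ 2 = 1 + γ * t ^ 2 := Real.sq_sqrt hu.le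
  have h3p : (0:ℝ) < Real.sqrt 3 := Real.sqrt_pos.2 (by norm_num)
  refine le_of_sq_le_sq' (by positivity) (by positivity) ?_
  have hb : (2 / (3 * Real.sqrt 3) * Real.sqrt γ *
      ((1 + γ * t ^ 2) * Real.sqrt (1 + γ * t ^ 2))) ^ 2
      = 2 ^ 2 / (3 ^ 2 * (Real.sqrt 3) ^ 2) * (Real.sqrt γ) ^ 2 *
        ((1 + γ * t ^ 2) ^ 2 * (Real.sqrt (1 + γ * t ^ 2)) ^ 2) := by ring
  rw [hb, h3, hγ2, hsu2, mul_pow, sq_abs]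
  nlinarith [sq_nonneg (2 * γ * t ^ 2 - 1),
    mul_nonneg (sq_nonneg (2 * γ * t ^ 2 - 1)) (mul_nonneg hγ.le (sq_nonneg t)), hγ.le,
    sq_nonneg t]

private lemma local_bound (γ t T : ℝ) (hγ : 0 < γ) (hT : 0 < T) (ht : |t| ≤ T)
    (hsmall : 2 * γ * T ^ 2 ≤ 1) :
    γ * |t| ≤ γ * T * ((1 + γ * T ^ 2) * Real.sqrt (1 + γ * T ^ 2))⁻¹ *
      ((1 + γ * t ^ 2) * Real.sqrt (1 + γ * t ^ 2)) := by
  have hu : (0:ℝ) < 1 + γ * t ^ 2 := by positivity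
  have hU : (0:ℝ) < 1 + γ * T ^ 2 := by positivity
  have hsu2 : (Real.sqrt (1 + γ * t ^ 2)) ^ 2 = 1 + γ * t ^ 2 := Real.sq_sqrt hu.le
  have hsU2 : (Real.sqrt (1 + γ * T ^ 2)) ^ 2 = 1 + γ * T ^ 2 := Real.sq_sqrt hU.le
  have hsup : (0:ℝ) < Real.sqrt (1 + γ * t ^ 2) := Real.sqrt_pos.2 hu
  have hsUp : (0:ℝ) < Real.sqrt (1 + γ * T ^ 2) := Real.sqrt_pos.2 hU
  have ha : t ^ 2 ≤ T ^ 2 := by nlinarith [abs_nonneg t, sq_abs t]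
  have h1 : 0 ≤ T ^ 2 - t ^ 2 := by linarith
  have h2 : 0 ≤ 1 - 2 * γ * t ^ 2 := by nlinarith
  have h3 : 0 ≤ 1 - 2 * γ * T ^ 2 := by linarith
  have hγa : 0 ≤ γ * t ^ 2 := by positivity
  have hγb : 0 ≤ γ * T ^ 2 := by positivity
  have key : t ^ 2 * (1 + γ * T ^ 2) ^ 3 ≤ T ^ 2 * (1 + γ * t ^ 2) ^ 3 := by
    nlinarith [mul_nonneg h1 h2,
      mul_nonneg (mul_nonneg h1 hγa) h3,
      mul_nonneg (mul_nonneg (mul_nonneg h1 hγa) hγb) h2,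
      mul_nonneg (mul_nonneg (mul_nonneg h1 hγa) hγb) h3]
  have hrw : γ * T * ((1 + γ * T ^ 2) * Real.sqrt (1 + γ * T ^ 2))⁻¹ *
      ((1 + γ * t ^ 2) * Real.sqrt (1 + γ * t ^ 2))
      = γ * T * ((1 + γ * t ^ 2) * Real.sqrt (1 + γ * t ^ 2)) /
        ((1 + γ * T ^ 2) * Real.sqrt (1 + γ * T ^ 2)) := by ring
  rw [hrw, le_div_iff₀ (by positivity)]
  refine le_of_sq_le_sq' (by positivity) (by positivity) ?_
  have e1 : (γ * |t| * ((1 + γ * T ^ 2) * Real.sqrt (1 + γ * T ^ 2))) ^ 2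
      = γ ^ 2 * t ^ 2 * ((1 + γ * T ^ 2) ^ 2 * (1 + γ * T ^ 2)) := by
    rw [show (γ * |t| * ((1 + γ * T ^ 2) * Real.sqrt (1 + γ * T ^ 2))) ^ 2
      = γ ^ 2 * |t| ^ 2 * ((1 + γ * T ^ 2) ^ 2 * (Real.sqrt (1 + γ * T ^ 2)) ^ 2) from by ring,
      sq_abs, hsU2]
  have e2 : (γ * T * ((1 + γ * t ^ 2) * Real.sqrt (1 + γ * t ^ 2))) ^ 2
      = γ ^ 2 * T ^ 2 * ((1 + γ * t ^ 2) ^ 2 * (1 + γ * t ^ 2)) := by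
    rw [show (γ * T * ((1 + γ * t ^ 2) * Real.sqrt (1 + γ * t ^ 2))) ^ 2
      = γ ^ 2 * T ^ 2 * ((1 + γ * t ^ 2) ^ 2 * (Real.sqrt (1 + γ * t ^ 2)) ^ 2) from by ring,
      hsu2]
  rw [e1, e2]
  nlinarith [mul_le_mul_of_nonneg_left key (sq_nonneg γ)]


open Classical in
/-- Lipschitz bound for `f(x) = max_i (1 + γ(x + λ_i)²)^{-1/2}` on `[0, μ_x]`,
for constants `μ_λ ≤ λ_i ≤ 0`, `γ > 0`, `μ_x ≥ 0` with `max{μ_λ², μ_x²} > 0`: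
the Lipschitz constant is at most `(2/(3√3))√γ` when `γ ≥ 1/(2 max{μ_λ², μ_x²})`,
at most `γ max{−μ_λ, μ_x} (1 + γ max{μ_λ², μ_x²})^{-3/2}` otherwise,
and in all cases at most `(2/(3√3))√γ`. -/
theorem lipschitz_max_filter (n : ℕ) (lam : Fin (n + 1) → ℝ) (μlam : ℝ)
    (hμlam : μlam ≤ 0) (hlam : ∀ i, μlam ≤ lam i ∧ lam i ≤ 0)
    (γ : ℝ) (hγ : 0 < γ) (μx : ℝ) (hμx : 0 ≤ μx)
    (hpos : 0 < max (μlam ^ 2) (μx ^ 2)) :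
    ∀ x ∈ Set.Icc (0 : ℝ) μx, ∀ y ∈ Set.Icc (0 : ℝ) μx,
      (|(⨆ i, 1 / Real.sqrt (1 + γ * (x + lam i) ^ 2)) -
          (⨆ i, 1 / Real.sqrt (1 + γ * (y + lam i) ^ 2))| ≤
        (if 1 / (2 * max (μlam ^ 2) (μx ^ 2)) ≤ γ then
            2 / (3 * Real.sqrt 3) * Real.sqrt γ
          else γ * max (-μlam) μx * (1 + γ * max (μlam ^ 2) (μx ^ 2)) ^ (-(3 : ℝ) / 2))
          * |x - y|) ∧
      |(⨆ i, 1 / Real.sqrt (1 + γ * (x + lam i) ^ 2)) -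
          (⨆ i, 1 / Real.sqrt (1 + γ * (y + lam i) ^ 2))| ≤
        2 / (3 * Real.sqrt 3) * Real.sqrt γ * |x - y| := by
  intro x hx y hy
  have comp : ∀ C : ℝ,
      (∀ t, μlam ≤ t → t ≤ μx → γ * |t| ≤ C * ((1 + γ * t ^ 2) * Real.sqrt (1 + γ * t ^ 2))) →
      |(⨆ i, 1 / Real.sqrt (1 + γ * (x + lam i) ^ 2)) -
        (⨆ i, 1 / Real.sqrt (1 + γ * (y + lam i) ^ 2))| ≤ C * |x - y| := by
    intro C hC
    refine sup_abs_sub_le _ _ _ fun i => ?_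
    have hax : x + lam i ∈ Set.Icc μlam μx :=
      ⟨by linarith [(hlam i).1, hx.1], by linarith [(hlam i).2, hx.2]⟩
    have hay : y + lam i ∈ Set.Icc μlam μx :=
      ⟨by linarith [(hlam i).1, hy.1], by linarith [(hlam i).2, hy.2]⟩
    have h := comp_lip γ C μlam μx hγ hC hax hay
    rwa [show x + lam i - (y + lam i) = x - y from by ring] at h
  have conj2 := comp _ (fun t _ _ => global_bound γ t hγ)
  refine ⟨?_, conj2⟩
  split_ifs with hcase
  · exact conj2
  · set T := max (-μlam) μx with hT
    have hT2 : T ^ 2 = max (μlam ^ 2) (μx ^ 2) := by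
      rcases le_total (-μlam) μx with h | h
      · rw [hT, max_eq_right h, max_eq_right (by nlinarith)]
      · rw [hT, max_eq_left h, max_eq_left (by nlinarith)]; ring
    have hT0 : 0 ≤ T := le_trans hμx (le_max_right _ _)
    have hTpos : 0 < T := by nlinarith
    have hMpos : 0 < max (μlam ^ 2) (μx ^ 2) := hpos
    have hsmall : 2 * γ * T ^ 2 ≤ 1 := by
      have hlt : γ < 1 / (2 * max (μlam ^ 2) (μx ^ 2)) := lt_of_not_ge hcase
      rw [lt_div_iff₀ (by positivity)] at hlt
      nlinarith [hT2]
    have hUp : (0:ℝ) < 1 + γ * max (μlam ^ 2) (μx ^ 2) := by positivity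
    have hrpow : (1 + γ * max (μlam ^ 2) (μx ^ 2)) ^ (-(3 : ℝ) / 2)
        = ((1 + γ * max (μlam ^ 2) (μx ^ 2)) *
            Real.sqrt (1 + γ * max (μlam ^ 2) (μx ^ 2)))⁻¹ := by
      rw [show (-(3:ℝ)/2) = -(1 + 1/2) by norm_num, Real.rpow_neg hUp.le,
        Real.rpow_add hUp, Real.rpow_one, ← Real.sqrt_eq_rpow]
    refine comp _ fun t htl htr => ?_
    rw [hrpow, ← hT2]
    refine local_bound γ t T hγ hTpos ?_ hsmall
    refine abs_le.2 ⟨?_, le_trans htr (le_max_right _ _)⟩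
    have := le_max_left (-μlam) μx
    linarith
end

section
/- Let L be a real symmetric M×M matrix whose eigenvalues all lie in [-4, 0], let γ > 0, and let Z be a real M×T matrix. Then for all s, s' ∈ [0, 4], |‖A(s)^{-1/2} Z‖₂ − ‖A(s')^{-1/2} Z‖₂| ≤ L_k |s − s'|, where L_k ≤ (2/(3√3))·√γ·‖Z‖₂; moreover, when γ < 1/32, the sharper bound L_k ≤ 4γ(1 + 16γ)^{-3/2}‖Z‖₂ holds. -/
open Matrix

/-- `A(s) = I + γ (L + s I)²`. -/
noncomputable def Amat {M : ℕ} (L : Matrix (Fin M) (Fin M) ℝ) (γ s : ℝ) :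
    Matrix (Fin M) (Fin M) ℝ :=
  1 + γ • (L + s • (1 : Matrix (Fin M) (Fin M) ℝ)) ^ 2

open Classical in
/-- For a positive semidefinite `A`, `invSqrt A` is the inverse of the unique positive
semidefinite square root of `A` (junk value `0` otherwise). -/
noncomputable def invSqrt {n : ℕ} (A : Matrix (Fin n) (Fin n) ℝ) : Matrix (Fin n) (Fin n) ℝ :=
  if h : A.PosSemidef then
    ((h.1.eigenvectorUnitary : Matrix (Fin n) (Fin n) ℝ) *
      diagonal ((↑) ∘ (√·) ∘ h.1.eigenvalues) *
      (star h.1.eigenvectorUnitary : Matrix (Fin n) (Fin n) ℝ))⁻¹ else 0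

/-- Spectral norm (largest singular value) of a real matrix. -/
noncomputable def specNorm {m n : ℕ} (A : Matrix (Fin m) (Fin n) ℝ) : ℝ :=
  ‖LinearMap.toContinuousLinearMap (Matrix.toEuclideanLin A)‖

open scoped Matrix.Norms.L2Operator

namespace LipschitzLineSearchAux

lemma specNorm_eq {m n : ℕ} (A : Matrix (Fin m) (Fin n) ℝ) : specNorm A = ‖A‖ := rfl

lemma norm_one_le (M : ℕ) : ‖(1 : Matrix (Fin M) (Fin M) ℝ)‖ ≤ 1 := by
  rw [Matrix.cstar_norm_def, _root_.map_one]
  exact ContinuousLinearMap.norm_id_le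

lemma norm_unitary_le {M : ℕ} (U : Matrix (Fin M) (Fin M) ℝ) (hU : star U * U = 1) : ‖U‖ ≤ 1 := by
  have h := CStarRing.norm_star_mul_self (x := U)
  rw [hU] at h
  nlinarith [norm_one_le M, norm_nonneg U, norm_nonneg (1 : Matrix (Fin M) (Fin M) ℝ)]

lemma norm_diagonal_le {M : ℕ} (w : Fin M → ℝ) (c : ℝ) (hc : 0 ≤ c) (h : ∀ i, |w i| ≤ c) :
    ‖Matrix.diagonal w‖ ≤ c := by
  rw [Matrix.l2_opNorm_def]
  apply ContinuousLinearMap.opNorm_le_bound _ hc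
  intro x
  rw [LinearEquiv.trans_apply, LinearMap.coe_toContinuousLinearMap']
  rw [Matrix.toEuclideanLin_apply]
  rw [EuclideanSpace.norm_eq, EuclideanSpace.norm_eq]
  have key : ∀ i, ‖((WithLp.equiv 2 (Fin M → ℝ)).symm
      (Matrix.diagonal w *ᵥ (WithLp.equiv 2 (Fin M → ℝ)) x)) i‖ ^ 2 ≤ c ^ 2 * ‖x i‖ ^ 2 := by
    intro i
    have hv : ((WithLp.equiv 2 (Fin M → ℝ)).symm
        (Matrix.diagonal w *ᵥ (WithLp.equiv 2 (Fin M → ℝ)) x)) i = w i * x i := by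
      simp [Matrix.mulVec_diagonal]
    rw [hv]
    have h1 : ‖w i * x i‖ = |w i| * ‖x i‖ := by
      simp [abs_mul, Real.norm_eq_abs]
    rw [h1, mul_pow]
    have h2 : |w i| ^ 2 ≤ c ^ 2 := pow_le_pow_left₀ (abs_nonneg _) (h i) 2
    exact mul_le_mul_of_nonneg_right h2 (by positivity)
  calc Real.sqrt (∑ i, ‖((WithLp.equiv 2 (Fin M → ℝ)).symm
      (Matrix.diagonal w *ᵥ (WithLp.equiv 2 (Fin M → ℝ)) x)) i‖ ^ 2)
      ≤ Real.sqrt (∑ i, c ^ 2 * ‖x i‖ ^ 2) :=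
        Real.sqrt_le_sqrt (Finset.sum_le_sum fun i _ => key i)
    _ = c * Real.sqrt (∑ i, ‖x i‖ ^ 2) := by
        rw [← Finset.mul_sum, Real.sqrt_mul (by positivity), Real.sqrt_sq hc]

lemma conjMul {M : ℕ} {U : Matrix (Fin M) (Fin M) ℝ} (hU2 : star U * U = 1)
    (A B : Matrix (Fin M) (Fin M) ℝ) :
    (U * A * star U) * (U * B * star U) = U * (A * B) * star U := by
  simp only [← mul_assoc]
  rw [mul_assoc (U * A) (star U) U, hU2, mul_one]

lemma conjSmul {M : ℕ} (U : Matrix (Fin M) (Fin M) ℝ) (c : ℝ)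
    (A : Matrix (Fin M) (Fin M) ℝ) :
    c • (U * A * star U) = U * (c • A) * star U := by
  rw [mul_smul_comm, smul_mul_assoc]

lemma diag_arith {M : ℕ} (d : Fin M → ℝ) (γ s : ℝ) :
    (1 : Matrix (Fin M) (Fin M) ℝ) + γ • (diagonal d + s • 1) ^ 2
      = diagonal (fun i => 1 + γ * (d i + s) ^ 2) := by
  rw [← diagonal_one, ← diagonal_smul, diagonal_add, pow_two, diagonal_mul_diagonal,
    ← diagonal_smul, diagonal_add]
  refine congrArg diagonal (funext fun i => ?_)
  simp only [Pi.add_apply, Pi.smul_apply, Pi.one_apply, smul_eq_mul]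
  ring

lemma Amat_conj {M : ℕ} {U : Matrix (Fin M) (Fin M) ℝ}
    (hU1 : U * star U = 1) (hU2 : star U * U = 1) (d : Fin M → ℝ) (γ s : ℝ) :
    Amat (U * diagonal d * star U) γ s
      = U * diagonal (fun i => 1 + γ * (d i + s) ^ 2) * star U := by
  have h1 : (1 : Matrix (Fin M) (Fin M) ℝ) = U * 1 * star U := by rw [mul_one, hU1]
  rw [Amat, ← diag_arith d γ s]
  nth_rewrite 1 [h1]
  nth_rewrite 2 [h1]
  rw [conjSmul U s, ← Matrix.add_mul, ← Matrix.mul_add, pow_two, conjMul hU2,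
    conjSmul U γ, ← Matrix.add_mul, ← Matrix.mul_add, ← pow_two]

lemma conj_diag_posSemidef {M : ℕ} {U : Matrix (Fin M) (Fin M) ℝ}
    (p : Fin M → ℝ) (hp : ∀ i, 0 ≤ p i) :
    (U * diagonal p * star U).PosSemidef := by
  have hd : (diagonal p).PosSemidef := Matrix.posSemidef_diagonal_iff.mpr hp
  have := hd.mul_mul_conjTranspose_same U
  rwa [← Matrix.star_eq_conjTranspose] at this

open scoped MatrixOrder in
lemma invSqrt_conj_diag {M : ℕ} {U : Matrix (Fin M) (Fin M) ℝ}
    (hU1 : U * star U = 1) (hU2 : star U * U = 1)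
    (p : Fin M → ℝ) (hp : ∀ i, 0 < p i) :
    invSqrt (U * diagonal p * star U)
      = U * diagonal (fun i => (Real.sqrt (p i))⁻¹) * star U := by
  have hP : (U * diagonal p * star U).PosSemidef :=
    conj_diag_posSemidef p (fun i => (hp i).le)
  rw [invSqrt, dif_pos hP]
  have hsq : ((hP.1.eigenvectorUnitary : Matrix (Fin M) (Fin M) ℝ) *
      diagonal ((↑) ∘ (√·) ∘ hP.1.eigenvalues) *
      (star hP.1.eigenvectorUnitary : Matrix (Fin M) (Fin M) ℝ))
        = U * diagonal (fun i => Real.sqrt (p i)) * star U := by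
    have e1 : ((hP.1.eigenvectorUnitary : Matrix (Fin M) (Fin M) ℝ) *
        diagonal ((↑) ∘ (√·) ∘ hP.1.eigenvalues) *
        (star hP.1.eigenvectorUnitary : Matrix (Fin M) (Fin M) ℝ))
          = CFC.sqrt (U * diagonal p * star U) := by
      rw [CFC.sqrt_eq_cfc, cfc_nnreal_eq_real _ _ (nonneg_iff_posSemidef.mpr hP), hP.1.cfc_eq, IsHermitian.cfc,
        Unitary.conjStarAlgAut_apply]
      congr 2
      congr 1
      funext i
      simp [max_eq_left (hP.eigenvalues_nonneg i)]
    rw [e1]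
    apply CFC.sqrt_unique _
      (nonneg_iff_posSemidef.mpr (conj_diag_posSemidef _ (fun i => Real.sqrt_nonneg _)))
    rw [conjMul hU2, diagonal_mul_diagonal]
    refine congrArg₂ _ (congrArg₂ _ rfl (congrArg diagonal (funext fun i => ?_))) rfl
    exact Real.mul_self_sqrt (hp i).le
  rw [hsq]
  apply Matrix.inv_eq_right_inv
  rw [conjMul hU2, diagonal_mul_diagonal]
  have h1 : (fun i => Real.sqrt (p i) * (Real.sqrt (p i))⁻¹) = fun _ => (1:ℝ) := by
    funext i
    exact mul_inv_cancel₀ (ne_of_gt (Real.sqrt_pos.mpr (hp i)))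
  rw [h1, diagonal_one, mul_one, hU1]

noncomputable def gfun (γ x : ℝ) : ℝ := (Real.sqrt (1 + γ * x ^ 2))⁻¹

lemma gfun_hasDerivAt (γ : ℝ) (hγ : 0 < γ) (x : ℝ) :
    HasDerivAt (gfun γ)
      (-(γ * x / ((1 + γ * x ^ 2) * Real.sqrt (1 + γ * x ^ 2)))) x := by
  have hp : 0 < 1 + γ * x ^ 2 := by positivity
  have h1 : HasDerivAt (fun x : ℝ => 1 + γ * x ^ 2) (γ * (2 * x)) x := by
    simpa using ((hasDerivAt_pow 2 x).const_mul γ).const_add 1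
  have h2 : HasDerivAt Real.sqrt (1 / (2 * Real.sqrt (1 + γ * x ^ 2))) (1 + γ * x ^ 2) :=
    Real.hasDerivAt_sqrt (ne_of_gt hp)
  have h3 := (h2.comp x h1)
  have hsne : Real.sqrt (1 + γ * x ^ 2) ≠ 0 := ne_of_gt (Real.sqrt_pos.mpr hp)
  have h4 := h3.inv hsne
  refine HasDerivAt.congr_deriv (f := gfun γ) h4 ?_
  symm
  have hsq : Real.sqrt (1 + γ * x ^ 2) ^ 2 = 1 + γ * x ^ 2 := Real.sq_sqrt hp.le
  rw [Function.comp_apply]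
  field_simp
  rw [hsq]

lemma gfun_lip (γ : ℝ) (hγ : 0 < γ) (K : ℝ)
    (hK : ∀ x ∈ Set.Icc (-4:ℝ) 4,
      γ * |x| ≤ K * ((1 + γ * x ^ 2) * Real.sqrt (1 + γ * x ^ 2)))
    (a b : ℝ) (ha : a ∈ Set.Icc (-4:ℝ) 4) (hb : b ∈ Set.Icc (-4:ℝ) 4) :
    |gfun γ a - gfun γ b| ≤ K * |a - b| := by
  have bound : ∀ x ∈ Set.Icc (-4:ℝ) 4,
      ‖-(γ * x / ((1 + γ * x ^ 2) * Real.sqrt (1 + γ * x ^ 2)))‖ ≤ K := by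
    intro x hx
    have hp : 0 < 1 + γ * x ^ 2 := by positivity
    have hD : 0 < (1 + γ * x ^ 2) * Real.sqrt (1 + γ * x ^ 2) := by positivity
    rw [Real.norm_eq_abs, abs_neg, abs_div, abs_of_pos hD, abs_mul, abs_of_pos hγ]
    rw [div_le_iff₀ hD]
    exact hK x hx
  have := (convex_Icc (-4:ℝ) 4).norm_image_sub_le_of_norm_hasDerivWithin_le
    (fun x _ => (gfun_hasDerivAt γ hγ x).hasDerivWithinAt) bound hb ha
  simpa [Real.norm_eq_abs] using this

lemma K1_bound (γ x : ℝ) (hγ : 0 < γ) :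
    γ * |x| ≤ (2 / (3 * Real.sqrt 3) * Real.sqrt γ) *
      ((1 + γ * x ^ 2) * Real.sqrt (1 + γ * x ^ 2)) := by
  have hp : (0:ℝ) < 1 + γ * x ^ 2 := by positivity
  have h3 : Real.sqrt 3 ^ 2 = 3 := Real.sq_sqrt (by norm_num)
  have hγ2 : Real.sqrt γ ^ 2 = γ := Real.sq_sqrt hγ.le
  have hp2 : Real.sqrt (1 + γ * x ^ 2) ^ 2 = 1 + γ * x ^ 2 := Real.sq_sqrt hp.le
  have h3p : (0:ℝ) < Real.sqrt 3 := Real.sqrt_pos.mpr (by norm_num)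
  refine le_of_pow_le_pow_left₀ two_ne_zero (by positivity) ?_
  simp only [mul_pow, div_pow, sq_abs]
  rw [h3, hγ2, hp2]
  nlinarith [mul_nonneg (mul_nonneg hγ.le (sq_nonneg (2 * (γ * x ^ 2) - 1)))
    (by positivity : (0:ℝ) ≤ γ * x ^ 2 + 4), sq_nonneg x]

lemma rpow_neg32 (γ : ℝ) (hγ : 0 < γ) :
    (1 + 16 * γ) ^ (-(3 : ℝ) / 2)
      = ((1 + 16 * γ) * Real.sqrt (1 + 16 * γ))⁻¹ := by
  have hq : (0:ℝ) < 1 + 16 * γ := by linarith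
  rw [show (-(3:ℝ)/2) = -(3/2) by ring, Real.rpow_neg hq.le,
    show (3:ℝ)/2 = 1 + 1/2 by ring, Real.rpow_add hq, Real.rpow_one,
    ← Real.sqrt_eq_rpow]

lemma K2_bound (γ x : ℝ) (hγ : 0 < γ) (hγ32 : γ < 1 / 32) (hx : |x| ≤ 4) :
    γ * |x| ≤ (4 * γ * (1 + 16 * γ) ^ (-(3 : ℝ) / 2)) *
      ((1 + γ * x ^ 2) * Real.sqrt (1 + γ * x ^ 2)) := by
  have hq : (0:ℝ) < 1 + 16 * γ := by linarith
  have hp : (0:ℝ) < 1 + γ * x ^ 2 := by positivity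
  have hq2 : Real.sqrt (1 + 16 * γ) ^ 2 = 1 + 16 * γ := Real.sq_sqrt hq.le
  have hp2 : Real.sqrt (1 + γ * x ^ 2) ^ 2 = 1 + γ * x ^ 2 := Real.sq_sqrt hp.le
  have hqs : (0:ℝ) < Real.sqrt (1 + 16 * γ) := Real.sqrt_pos.mpr hq
  have hps : (0:ℝ) < Real.sqrt (1 + γ * x ^ 2) := Real.sqrt_pos.mpr hp
  rw [rpow_neg32 γ hγ]
  rw [show 4 * γ * ((1 + 16 * γ) * Real.sqrt (1 + 16 * γ))⁻¹ *
        ((1 + γ * x ^ 2) * Real.sqrt (1 + γ * x ^ 2))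
      = ((1 + 16 * γ) * Real.sqrt (1 + 16 * γ))⁻¹ *
        (4 * γ * ((1 + γ * x ^ 2) * Real.sqrt (1 + γ * x ^ 2))) by ring]
  rw [le_inv_mul_iff₀ (by positivity : (0:ℝ) < (1 + 16 * γ) * Real.sqrt (1 + 16 * γ))]
  have hu16 : x ^ 2 ≤ 16 := by nlinarith [abs_le.mp hx, abs_nonneg x, sq_abs x]
  have hB : (0:ℝ) ≤ 1 - 48 * γ ^ 2 * x ^ 2 - 16 * γ ^ 3 * (x ^ 2) ^ 2
      - 256 * γ ^ 3 * x ^ 2 := by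
    nlinarith [sq_nonneg x, mul_pos hγ hγ, mul_pos (mul_pos hγ hγ) hγ,
      mul_nonneg (mul_nonneg hγ.le hγ.le) (sq_nonneg x),
      mul_nonneg (mul_nonneg (mul_nonneg hγ.le hγ.le) hγ.le) (sq_nonneg x),
      mul_nonneg (mul_nonneg (mul_nonneg (mul_nonneg hγ.le hγ.le) hγ.le) (sq_nonneg x))
        (sq_nonneg x)]
  have hpoly : x ^ 2 * (1 + 16 * γ) ^ 3 ≤ 16 * (1 + γ * x ^ 2) ^ 3 := by
    nlinarith [mul_nonneg (sub_nonneg.mpr hu16) hB]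
  refine le_of_pow_le_pow_left₀ two_ne_zero (by positivity) ?_
  simp only [mul_pow, sq_abs]
  rw [hq2, hp2]
  nlinarith [hpoly, mul_le_mul_of_nonneg_left hpoly (mul_nonneg hγ.le hγ.le)]

lemma main_bound {M T : ℕ} (L : Matrix (Fin M) (Fin M) ℝ) (hH : L.IsHermitian)
    (hd : ∀ i, hH.eigenvalues i ∈ Set.Icc (-4:ℝ) 0)
    (γ : ℝ) (hγ : 0 < γ) (Z : Matrix (Fin M) (Fin T) ℝ) (K : ℝ) (hK0 : 0 ≤ K)
    (hK : ∀ x ∈ Set.Icc (-4:ℝ) 4,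
      γ * |x| ≤ K * ((1 + γ * x ^ 2) * Real.sqrt (1 + γ * x ^ 2)))
    (s s' : ℝ) (hs : s ∈ Set.Icc (0:ℝ) 4) (hs' : s' ∈ Set.Icc (0:ℝ) 4) :
    |specNorm (invSqrt (Amat L γ s) * Z) - specNorm (invSqrt (Amat L γ s') * Z)|
      ≤ K * specNorm Z * |s - s'| := by
  classical
  set U : Matrix (Fin M) (Fin M) ℝ := (hH.eigenvectorUnitary : Matrix (Fin M) (Fin M) ℝ) with hUdef
  have hU1 : U * star U = 1 := Unitary.coe_mul_star_self _
  have hU2 : star U * U = 1 := Unitary.coe_star_mul_self _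
  set d := hH.eigenvalues with hddef
  have hLspec : L = U * diagonal d * star U := by
    have := hH.spectral_theorem
    rw [Unitary.conjStarAlgAut_apply] at this
    exact this
  have hinv : ∀ t : ℝ,
      invSqrt (Amat L γ t) = U * diagonal (fun i => gfun γ (d i + t)) * star U := by
    intro t
    rw [hLspec, Amat_conj hU1 hU2,
      invSqrt_conj_diag hU1 hU2 (fun i => 1 + γ * (d i + t) ^ 2) (fun i => by positivity)]
    rfl
  have hw : ∀ i, |gfun γ (d i + s) - gfun γ (d i + s')| ≤ K * |s - s'| := by
    intro i
    have h1 := (hd i).1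
    have h2 := (hd i).2
    have hmem1 : d i + s ∈ Set.Icc (-4:ℝ) 4 :=
      Set.mem_Icc.mpr ⟨by linarith [hs.1], by linarith [hs.2]⟩
    have hmem2 : d i + s' ∈ Set.Icc (-4:ℝ) 4 :=
      Set.mem_Icc.mpr ⟨by linarith [hs'.1], by linarith [hs'.2]⟩
    have := gfun_lip γ hγ K hK (d i + s) (d i + s') hmem1 hmem2
    simpa [show d i + s - (d i + s') = s - s' by ring] using this
  have hdiff : invSqrt (Amat L γ s) - invSqrt (Amat L γ s')
      = U * diagonal (fun i => gfun γ (d i + s) - gfun γ (d i + s')) * star U := by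
    rw [hinv s, hinv s', ← Matrix.sub_mul, ← Matrix.mul_sub, diagonal_sub]
  have hKs : (0:ℝ) ≤ K * |s - s'| := mul_nonneg hK0 (abs_nonneg _)
  have hdiffnorm : ‖invSqrt (Amat L γ s) - invSqrt (Amat L γ s')‖ ≤ K * |s - s'| := by
    rw [hdiff]
    calc ‖U * diagonal (fun i => gfun γ (d i + s) - gfun γ (d i + s')) * star U‖
        ≤ ‖U * diagonal (fun i => gfun γ (d i + s) - gfun γ (d i + s'))‖ * ‖star U‖ :=
          Matrix.l2_opNorm_mul _ _
      _ ≤ (‖U‖ * ‖diagonal (fun i => gfun γ (d i + s) - gfun γ (d i + s'))‖) * ‖star U‖ :=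
          mul_le_mul_of_nonneg_right (Matrix.l2_opNorm_mul _ _) (norm_nonneg _)
      _ ≤ (1 * (K * |s - s'|)) * 1 := by
          have hnU : ‖U‖ ≤ 1 := norm_unitary_le U hU2
          have hnsU : ‖star U‖ ≤ 1 := by
            apply norm_unitary_le
            rw [star_star, hU1]
          have hnd : ‖diagonal (fun i => gfun γ (d i + s) - gfun γ (d i + s'))‖
              ≤ K * |s - s'| := norm_diagonal_le _ _ hKs hw
          have h0d : (0:ℝ) ≤ ‖diagonal (fun i => gfun γ (d i + s) - gfun γ (d i + s'))‖ :=
            norm_nonneg _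
          have := mul_le_mul (mul_le_mul hnU hnd h0d zero_le_one) hnsU (norm_nonneg _)
            (by linarith [hKs])
          simpa using this
      _ = K * |s - s'| := by ring
  rw [specNorm_eq, specNorm_eq, specNorm_eq]
  calc |‖invSqrt (Amat L γ s) * Z‖ - ‖invSqrt (Amat L γ s') * Z‖|
      ≤ ‖invSqrt (Amat L γ s) * Z - invSqrt (Amat L γ s') * Z‖ := abs_norm_sub_norm_le _ _
    _ = ‖(invSqrt (Amat L γ s) - invSqrt (Amat L γ s')) * Z‖ := by rw [Matrix.sub_mul]
    _ ≤ ‖invSqrt (Amat L γ s) - invSqrt (Amat L γ s')‖ * ‖Z‖ := Matrix.l2_opNorm_mul _ _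
    _ ≤ (K * |s - s'|) * ‖Z‖ := mul_le_mul_of_nonneg_right hdiffnorm (norm_nonneg _)
    _ = K * ‖Z‖ * |s - s'| := by ring

end LipschitzLineSearchAux

open LipschitzLineSearchAux in
/-- For symmetric `L` with eigenvalues in `[-4,0]`, `γ > 0`, and `Z ∈ ℝ^{M×T}`,
the map `s ↦ ‖A(s)^{-1/2} Z‖₂` is Lipschitz on `[0,4]` with constant at most
`(2/(3√3))√γ ‖Z‖₂`; moreover, when `γ < 1/32`, the sharper Lipschitz constant
`4γ(1 + 16γ)^{-3/2} ‖Z‖₂` holds. -/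
theorem lipschitz_line_search {M T : ℕ} (L : Matrix (Fin M) (Fin M) ℝ) (hL : L.IsSymm)
    (hLeig : ∀ (μ : ℝ) (v : Fin M → ℝ), v ≠ 0 → L.mulVec v = μ • v → -4 ≤ μ ∧ μ ≤ 0)
    (γ : ℝ) (hγ : 0 < γ) (Z : Matrix (Fin M) (Fin T) ℝ) :
    ∀ s ∈ Set.Icc (0 : ℝ) 4, ∀ s' ∈ Set.Icc (0 : ℝ) 4,
      |specNorm (invSqrt (Amat L γ s) * Z) - specNorm (invSqrt (Amat L γ s') * Z)| ≤
        2 / (3 * Real.sqrt 3) * Real.sqrt γ * specNorm Z * |s - s'| ∧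
      (γ < 1 / 32 →
        |specNorm (invSqrt (Amat L γ s) * Z) - specNorm (invSqrt (Amat L γ s') * Z)| ≤
          4 * γ * (1 + 16 * γ) ^ (-(3 : ℝ) / 2) * specNorm Z * |s - s'|) := by
  have hH : L.IsHermitian := by
    rwa [Matrix.IsHermitian, Matrix.conjTranspose, Matrix.IsSymm] at *
  have hd : ∀ i, hH.eigenvalues i ∈ Set.Icc (-4:ℝ) 0 := by
    intro i
    have hvne : (⇑(hH.eigenvectorBasis i) : Fin M → ℝ) ≠ 0 := by
      intro h
      have h0 : hH.eigenvectorBasis i = 0 := by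
        ext j
        exact congrFun h j
      have h1 := hH.eigenvectorBasis.orthonormal.1 i
      rw [h0] at h1
      simp at h1
    have hmv := hH.mulVec_eigenvectorBasis i
    exact hLeig _ _ hvne hmv
  intro s hs s' hs'
  constructor
  · have := main_bound L hH hd γ hγ Z (2 / (3 * Real.sqrt 3) * Real.sqrt γ)
      (by positivity) (fun x _ => K1_bound γ x hγ) s s' hs hs'
    linarith [this]
  · intro hγ32
    have := main_bound L hH hd γ hγ Z (4 * γ * (1 + 16 * γ) ^ (-(3 : ℝ) / 2))
      (by positivity)
      (fun x hx => K2_bound γ x hγ hγ32 (abs_le.mpr ⟨hx.1, hx.2⟩)) s s' hs hs'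
    linarith [this]
end
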